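/- For any threshold graph with at least one edge (so m ≥ 1), the degree set D_{⌈m/2⌉} has at least 2 elements. -/

import Mathlib

open SimpleGraph Finset

/-- A threshold graph: there exist a nonnegative vertex weight function and a
nonnegative threshold `t` such that distinct vertices are adjacent iff the sum
of their weights exceeds `t`. -/
def SimpleGraph.IsThreshold {V : Type} (G : SimpleGraph V) : Prop :=
  ∃ (f : V → ℝ) (t : ℝ), (∀ v, 0 ≤ f v) ∧ 0 ≤ t ∧
    ∀ u v : V, u ≠ v → (G.Adj u v ↔ f u + f v > t)

/-- Degree of a vertex (no decidability assumptions). -/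
noncomputable def SimpleGraph.deg {V : Type} [Fintype V] (G : SimpleGraph V) (v : V) : ℕ :=
  Nat.card {u // G.Adj v u}

/-- `δ 0 = 0 < δ 1 < ⋯ < δ m` are exactly the degrees occurring in `G`;
the degree partition of `G` is `D_i = {v : deg v = δ i}`, `i = 0, …, m`. -/
structure SimpleGraph.DegreePartition {V : Type} [Fintype V] (G : SimpleGraph V)
    (m : ℕ) (δ : ℕ → ℕ) : Prop where
  zero : δ 0 = 0
  mono : ∀ i j, i < j → j ≤ m → δ i < δ j
  cover : ∀ v : V, ∃ i ≤ m, G.deg v = δ i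
  attained : ∀ i, 1 ≤ i → i ≤ m → ∃ v : V, G.deg v = δ i

/-- The degree set `D_i` of the degree partition. -/
noncomputable def SimpleGraph.Dset {V : Type} [Fintype V] (G : SimpleGraph V)
    (δ : ℕ → ℕ) (i : ℕ) : Finset V :=
  Finset.univ.filter (fun v => G.deg v = δ i)

/-- A key edge of a threshold graph with degree partition `D_0, …, D_m`: an edge
joining `D_k` and `D_{m+1-k}` for some `1 ≤ k ≤ ⌈m/2⌉`. -/
def SimpleGraph.IsKeyEdge {V : Type} [Fintype V] (G : SimpleGraph V)
    (m : ℕ) (δ : ℕ → ℕ) (e : Sym2 V) : Prop :=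
  e ∈ G.edgeSet ∧ ∃ x y k, e = s(x, y) ∧ 1 ≤ k ∧ k ≤ (m + 1) / 2 ∧
    G.deg x = δ k ∧ G.deg y = δ (m + 1 - k)

/-- The number of Hamilton cycles of `G`, counted as unordered spanning cycles
(a cycle is identified with its edge set). -/
noncomputable def SimpleGraph.hamCycleCount {V : Type} [Fintype V] [DecidableEq V]
    (G : SimpleGraph V) : ℕ :=
  Nat.card {s : Finset (Sym2 V) // ∃ (v : V) (w : G.Walk v v),
    w.IsHamiltonianCycle ∧ w.edges.toFinset = s}

/-- The multiset of degrees of `G`. -/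
noncomputable def SimpleGraph.degMultiset {V : Type} [Fintype V] (G : SimpleGraph V) :
    Multiset ℕ :=
  Finset.univ.val.map G.deg

/-- The degree sequence `n-1, n-1, n-2, …, ⌈n/2⌉, ⌈n/2⌉, …, 3, 2` of the graph `Gₙ`,
as a multiset: the values `2, …, n-1` together with an extra copy of `⌈n/2⌉` and of `n-1`. -/
def gnDegSeq (n : ℕ) : Multiset ℕ :=
  (Multiset.range (n - 2)).map (· + 2) + {(n + 1) / 2, n - 1}

/-- An independent set in a graph. -/
def SimpleGraph.IsIndepSet' {V : Type} (G : SimpleGraph V) (S : Set V) : Prop :=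
  ∀ u ∈ S, ∀ v ∈ S, u ≠ v → ¬ G.Adj u v

/-! In a threshold graph neighbourhoods are nested: `N(u) \ {v} ⊆ N(v) \ {u}` whenever
`deg u ≤ deg v`. Hence the neighbourhood of a vertex `v` of positive degree is
`(D_j ∪ ⋯ ∪ D_m) \ {v}` for some `j ≥ 1`, and since the degrees `δ_1 < ⋯ < δ_m` are distinct,
the index `j` is strictly decreasing in the degree class of `v`, which forces `j = m + 1 - i`
for `v ∈ D_i`. Writing `T_j` for the size of `upperDset j = D_j ∪ ⋯ ∪ D_m`, this gives
`δ_i = T_{m+1-i} - [m + 1 ≤ 2i]`.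
For `k = ⌈m/2⌉` and `c = m + 1 - k` we get `|D_k| = T_k - T_{k+1} = (δ_c + 1) - δ_{c-1} ≥ 2`. -/

theorem StrictAntiOn.eq_sub_of_mapsTo_Icc {m : ℕ} {b : ℕ → ℕ}
    (hb : StrictAntiOn b (Set.Icc 1 m)) (hmaps : Set.MapsTo b (Set.Icc 1 m) (Set.Icc 1 m))
    {i : ℕ} (hi : i ∈ Set.Icc 1 m) : b i = m + 1 - i := by
  have chain : ∀ d j, 1 ≤ j → j + d ≤ m → b (j + d) + d ≤ b j := by
    intro d
    induction d with
    | zero => simp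
    | succ d ih =>
      intro j hj hjd
      have step := hb ⟨by omega, by omega⟩ ⟨by omega, hjd⟩ (by omega : j + d < j + (d + 1))
      have := ih j hj (by omega)
      omega
  obtain ⟨hi1, him⟩ := hi
  have lower := chain (m - i) i hi1 (by omega)
  have upper := chain (i - 1) 1 le_rfl (by omega)
  rw [Nat.add_sub_cancel' him] at lower
  rw [Nat.add_sub_cancel' hi1] at upper
  have hbm := (hmaps ⟨hi1.trans him, le_rfl⟩).1
  have hb1 := (hmaps ⟨le_rfl, hi1.trans him⟩).2
  omega

namespace SimpleGraph

variable {V : Type} [Fintype V] {G : SimpleGraph V}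

theorem deg_eq_degree [DecidableRel G.Adj] (v : V) : G.deg v = G.degree v := by
  rw [deg, Nat.card_eq_fintype_card, ← card_neighborSet_eq_degree]
  rfl

section Nested

variable [DecidableEq V] [DecidableRel G.Adj]

theorem card_erase_neighborFinset_add_ite (u v : V) :
    #((G.neighborFinset u).erase v) + (if G.Adj u v then 1 else 0) = G.degree u := by
  rw [← card_neighborFinset_eq_degree]
  split_ifs with h
  · exact card_erase_add_one ((mem_neighborFinset G u v).2 h)
  · rw [erase_eq_of_notMem (by simpa using h), add_zero]

theorem IsThreshold.erase_neighborFinset_subset (hG : G.IsThreshold) {u v : V}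
    (h : G.deg u ≤ G.deg v) : (G.neighborFinset u).erase v ⊆ (G.neighborFinset v).erase u := by
  obtain ⟨f, t, -, -, hadj⟩ := hG
  have of_weight_le : ∀ {x y : V}, f x ≤ f y →
      (G.neighborFinset x).erase y ⊆ (G.neighborFinset y).erase x := by
    intro x y hxy w hw
    obtain ⟨hwy, hxw⟩ := mem_erase.1 hw
    rw [mem_neighborFinset] at hxw
    have := (hadj x w hxw.ne).1 hxw
    exact mem_erase.2 ⟨hxw.ne', (mem_neighborFinset G y w).2
      ((hadj y w (Ne.symm hwy)).2 (by linarith))⟩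
  rcases le_total (f u) (f v) with huv | hvu
  · exact of_weight_le huv
  · have hcard := card_erase_neighborFinset_add_ite (G := G) u v
    have hcard' := card_erase_neighborFinset_add_ite (G := G) v u
    rw [← deg_eq_degree] at hcard hcard'
    have hle : #((G.neighborFinset u).erase v) ≤ #((G.neighborFinset v).erase u) := by
      by_cases huv : G.Adj u v
      · simp only [huv, huv.symm, if_true] at hcard hcard'
        omega
      · simp only [huv, mt G.adj_symm huv, if_false] at hcard hcard'
        omega
    exact (eq_of_subset_of_card_le (of_weight_le hvu) hle).ge

end Nested

theorem IsThreshold.adj_of_adj_of_deg_le (hG : G.IsThreshold) {u v w : V} (huv : G.Adj u v)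
    (hvw : G.deg v ≤ G.deg w) (huw : u ≠ w) : G.Adj u w := by
  classical
  have hu : u ∈ (G.neighborFinset v).erase w := by simpa [huw] using huv.symm
  exact ((mem_neighborFinset G w u).1 (mem_erase.1 (hG.erase_neighborFinset_subset hvw hu)).2).symm

noncomputable def upperDset [DecidableEq V] (G : SimpleGraph V) (m : ℕ) (δ : ℕ → ℕ) (j : ℕ) :
    Finset V :=
  (Icc j m).biUnion (G.Dset δ)

theorem upperDset_anti [DecidableEq V] {m : ℕ} {δ : ℕ → ℕ} {j j' : ℕ} (h : j ≤ j') :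
    G.upperDset m δ j' ⊆ G.upperDset m δ j :=
  biUnion_subset_biUnion_of_subset_left _ (Icc_subset_Icc_left h)

namespace DegreePartition

variable {m : ℕ} {δ : ℕ → ℕ} (hdp : G.DegreePartition m δ)
include hdp

theorem le_iff_le {i j : ℕ} (hi : i ≤ m) (hj : j ≤ m) : δ i ≤ δ j ↔ i ≤ j :=
  StrictMonoOn.le_iff_le (fun a _ b hb hab => hdp.mono a b hab hb) hi hj

variable [DecidableEq V]

theorem mem_upperDset_iff {j : ℕ} (hj : j ≤ m) {w : V} :
    w ∈ G.upperDset m δ j ↔ δ j ≤ G.deg w := by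
  simp only [upperDset, Dset, mem_biUnion, mem_Icc, mem_filter, mem_univ, true_and]
  constructor
  · rintro ⟨i, ⟨hji, him⟩, hw⟩
    exact hw ▸ (hdp.le_iff_le hj him).2 hji
  · intro hw
    obtain ⟨i, him, hi⟩ := hdp.cover w
    exact ⟨i, ⟨(hdp.le_iff_le hj him).1 (hi ▸ hw), him⟩, hi⟩

theorem card_upperDset {k : ℕ} (hk : k ≤ m) :
    #(G.upperDset m δ k) = #(G.Dset δ k) + #(G.upperDset m δ (k + 1)) := by
  rw [upperDset, Icc_eq_cons_Ioc hk, cons_eq_insert, biUnion_insert, ← Icc_add_one_left_eq_Ioc]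
  refine card_union_of_disjoint (Finset.disjoint_left.2 fun w hwk hw => ?_)
  obtain ⟨i, hi, hwi⟩ := mem_biUnion.1 hw
  simp only [Dset, mem_filter, mem_univ, true_and] at hwk hwi
  have := hdp.mono k i (mem_Icc.1 hi).1 (mem_Icc.1 hi).2
  omega

theorem card_upperDset_lt {j j' : ℕ} (hj : 1 ≤ j) (hjj' : j < j') (hj' : j' ≤ m + 1) :
    #(G.upperDset m δ j') < #(G.upperDset m δ j) := by
  obtain ⟨v, hv⟩ := hdp.attained j hj (by omega)
  have hD : 0 < #(G.Dset δ j) := card_pos.2 ⟨v, by simp [Dset, hv]⟩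
  have hsplit := hdp.card_upperDset (k := j) (by omega)
  have := card_le_card (upperDset_anti (G := G) (m := m) (δ := δ) (show j + 1 ≤ j' by omega))
  omega

theorem exists_neighborFinset_eq_erase (hG : G.IsThreshold) [DecidableRel G.Adj] {v : V}
    (hv : 0 < G.deg v) :
    ∃ j, 1 ≤ j ∧ j ≤ m ∧ G.neighborFinset v = (G.upperDset m δ j).erase v := by
  have hne : (G.neighborFinset v).Nonempty := by
    rwa [← card_pos, card_neighborFinset_eq_degree, ← deg_eq_degree]
  obtain ⟨w₀, hw₀, hmin⟩ := exists_min_image (G.neighborFinset v) G.deg hne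
  rw [mem_neighborFinset] at hw₀
  obtain ⟨j, hjm, hj⟩ := hdp.cover w₀
  have hw₀pos : 0 < G.deg w₀ := by
    rw [deg_eq_degree, ← card_neighborFinset_eq_degree]
    exact card_pos.2 ⟨v, by simpa using hw₀.symm⟩
  refine ⟨j, ?_, hjm, ext fun w => ?_⟩
  · by_contra h0
    rw [show j = 0 by omega, hdp.zero] at hj
    omega
  rw [mem_erase, hdp.mem_upperDset_iff hjm, mem_neighborFinset, ← hj]
  exact ⟨fun hvw => ⟨hvw.ne', hmin w ((mem_neighborFinset G v w).2 hvw)⟩,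
    fun ⟨hwv, hw⟩ => hG.adj_of_adj_of_deg_le hw₀ hw (Ne.symm hwv)⟩

theorem add_ite_eq_card_upperDset [DecidableRel G.Adj] {i j : ℕ} (hi : i ≤ m) (hj : j ≤ m)
    {v : V} (hv : G.deg v = δ i) (hN : G.neighborFinset v = (G.upperDset m δ j).erase v) :
    δ i + (if j ≤ i then 1 else 0) = #(G.upperDset m δ j) := by
  have hmem : v ∈ G.upperDset m δ j ↔ j ≤ i := by
    rw [hdp.mem_upperDset_iff hj, hv, hdp.le_iff_le hj hi]
  rw [← hv, deg_eq_degree, ← card_neighborFinset_eq_degree, hN]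
  split_ifs with h
  · exact card_erase_add_one (hmem.2 h)
  · rw [erase_eq_of_notMem (mt hmem.1 h), add_zero]

theorem lt_of_add_ite_eq_card {i i' j j' : ℕ} (hii' : i < i') (hi' : i' ≤ m) (hj : 1 ≤ j)
    (hj' : j' ≤ m)
    (h : δ i + (if j ≤ i then 1 else 0) = #(G.upperDset m δ j))
    (h' : δ i' + (if j' ≤ i' then 1 else 0) = #(G.upperDset m δ j')) : j' < j := by
  have hδ := hdp.mono i i' hii' hi'
  by_contra! hjj'
  rcases hjj'.lt_or_eq with hlt | rfl
  · have := hdp.card_upperDset_lt hj hlt (by omega)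
    split_ifs at h h' <;> omega
  · split_ifs at h h' <;> omega

theorem add_ite_eq_card_upperDset_sub (hG : G.IsThreshold) {i : ℕ} (hi : i ≤ m) :
    δ i + (if m + 1 ≤ 2 * i then 1 else 0) = #(G.upperDset m δ (m + 1 - i)) := by
  classical
  rcases Nat.eq_zero_or_pos i with rfl | hi1
  · simp [hdp.zero, upperDset]
  have hex : ∀ n, n ∈ Set.Icc 1 m → ∃ j, j ∈ Set.Icc 1 m ∧
      δ n + (if j ≤ n then 1 else 0) = #(G.upperDset m δ j) := by
    rintro n ⟨hn1, hnm⟩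
    obtain ⟨v, hv⟩ := hdp.attained n hn1 hnm
    have hpos : 0 < G.deg v := hv ▸ hdp.zero ▸ hdp.mono 0 n hn1 hnm
    obtain ⟨j, hj1, hjm, hN⟩ := hdp.exists_neighborFinset_eq_erase hG hpos
    exact ⟨j, ⟨hj1, hjm⟩, hdp.add_ite_eq_card_upperDset hnm hjm hv hN⟩
  choose! b hbmem hb using hex
  have hanti : StrictAntiOn b (Set.Icc 1 m) := fun n hn n' hn' hnn' =>
    hdp.lt_of_add_ite_eq_card hnn' hn'.2 (hbmem n hn).1 (hbmem n' hn').2 (hb n hn) (hb n' hn')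
  have hbi := hanti.eq_sub_of_mapsTo_Icc hbmem ⟨hi1, hi⟩
  have := hb i ⟨hi1, hi⟩
  rw [hbi] at this
  split_ifs at this ⊢ <;> omega

end DegreePartition

end SimpleGraph

/-- for a threshold graph with `m ≥ 1`, `|D_{⌈m/2⌉}| ≥ 2`. -/
theorem stmt2 {V : Type} [Fintype V] (G : SimpleGraph V) (m : ℕ) (δ : ℕ → ℕ)
    (hG : G.IsThreshold) (hdp : G.DegreePartition m δ) (hm : 1 ≤ m) :
    2 ≤ (G.Dset δ ((m + 1) / 2)).card := by
  classical
  set k := (m + 1) / 2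
  have hc := hdp.add_ite_eq_card_upperDset_sub hG (i := m + 1 - k) (by omega)
  have hc' := hdp.add_ite_eq_card_upperDset_sub hG (i := m - k) (by omega)
  rw [show m + 1 - (m + 1 - k) = k by omega, if_pos (by omega)] at hc
  rw [show m + 1 - (m - k) = k + 1 by omega, if_neg (by omega)] at hc'
  have hsplit := hdp.card_upperDset (k := k) (by omega)
  have hδ := hdp.mono (m - k) (m + 1 - k) (by omega) (by omega)
  omega
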